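/- arXiv:2408.08264 — 2 statements merged into one kernel-verified Lean document; each statement's English description precedes it below -/
import Mathlib

section
/- Suppose the six pressure functions P_l, P_a, P_v, P_r, P_pa, P_pv and the two ventricular capacitance functions C_l, C_r are differentiable at a time t with C_l(t) ≠ 0 and C_r(t) ≠ 0, and that the CVSim-6 ODE system holds at t. Then the total stressed volume ΣV = V_l + V_a + V_v + V_r + V_pa + V_pv is differentiable at t with derivative zero; consequently, if the ODE system holds at every point of an interval, the total stressed volume is constant on that interval. -/
/-!
Each compartment's stressed volume `V₀ + (P - P_ext) C` changes at the rate `inflow - outflow`: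
for the ventricles the term `(P - P_th) C'` in the ODE is exactly what the product rule adds.
The six compartments form a closed loop, each flow leaving one compartment and entering the
next, so the net rates telescope to zero.
-/

theorem Convex.eq_of_hasDerivAt_zero {𝕜 G : Type*} [RCLike 𝕜] [NormedAddCommGroup G]
    [NormedSpace 𝕜 G] {f : 𝕜 → G} {s : Set 𝕜} (hs : Convex ℝ s)
    (hf : ∀ t ∈ s, HasDerivAt f 0 t) {x y : 𝕜} (hx : x ∈ s) (hy : y ∈ s) : f x = f y := by
  have h := hs.norm_image_sub_le_of_norm_hasDerivWithin_le
    (fun t ht => (hf t ht).hasDerivWithinAt) (fun _ _ => norm_zero.le) hy hx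
  rwa [zero_mul, norm_le_zero_iff, sub_eq_zero] at h

section StressedVolume

variable {P : ℝ → ℝ} {Pext V₀ q t : ℝ}

theorem hasDerivAt_stressedVolume {C : ℝ → ℝ} {C' : ℝ} (hC : HasDerivAt C C' t) (hC₀ : C t ≠ 0)
    (hP : HasDerivAt P ((q - (P t - Pext) * C') / C t) t) :
    HasDerivAt (fun t => V₀ + (P t - Pext) * C t) q t := by
  refine (((hP.sub_const Pext).mul hC).const_add V₀).congr_deriv ?_
  rw [div_mul_cancel₀ _ hC₀]
  ring

theorem hasDerivAt_stressedVolume_const {C : ℝ} (hC : C ≠ 0) (hP : HasDerivAt P (q / C) t) :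
    HasDerivAt (fun t => V₀ + (P t - Pext) * C) q t :=
  (((hP.sub_const Pext).mul_const C).const_add V₀).congr_deriv (div_mul_cancel₀ _ hC)

end StressedVolume

theorem cvsim6_total_stressed_volume_conserved_general
    (Pth Ca Cv Cpa Cpv : ℝ)
    (hCa : 0 < Ca) (hCv : 0 < Cv) (hCpa : 0 < Cpa) (hCpv : 0 < Cpv)
    (Vl0 Va0 Vv0 Vr0 Vpa0 Vpv0 : ℝ)
    (Pl Pa Pv Pr Ppa Ppv Cl Cr Cl' Cr' : ℝ → ℝ)
    (Qlin Qlout Qa Qrin Qrout Qpv : ℝ → ℝ)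
    (V : ℝ → ℝ)
    (hVdef : V = fun t =>
      (Vl0 + (Pl t - Pth) * Cl t) + (Va0 + (Pa t - Pth / 3) * Ca) +
      (Vv0 + Pv t * Cv) + (Vr0 + (Pr t - Pth) * Cr t) +
      (Vpa0 + (Ppa t - Pth) * Cpa) + (Vpv0 + (Ppv t - Pth) * Cpv))
    (s : Set ℝ) (hs : s.OrdConnected)
    (hCl : ∀ t ∈ s, HasDerivAt Cl (Cl' t) t)
    (hCr : ∀ t ∈ s, HasDerivAt Cr (Cr' t) t)
    (hClne : ∀ t ∈ s, Cl t ≠ 0) (hCrne : ∀ t ∈ s, Cr t ≠ 0)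
    (hPl : ∀ t ∈ s, HasDerivAt Pl ((Qlin t - Qlout t - (Pl t - Pth) * Cl' t) / Cl t) t)
    (hPa : ∀ t ∈ s, HasDerivAt Pa ((Qlout t - Qa t) / Ca) t)
    (hPv : ∀ t ∈ s, HasDerivAt Pv ((Qa t - Qrin t) / Cv) t)
    (hPr : ∀ t ∈ s, HasDerivAt Pr ((Qrin t - Qrout t - (Pr t - Pth) * Cr' t) / Cr t) t)
    (hPpa : ∀ t ∈ s, HasDerivAt Ppa ((Qrout t - Qpv t) / Cpa) t)
    (hPpv : ∀ t ∈ s, HasDerivAt Ppv ((Qpv t - Qlin t) / Cpv) t) :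
    (∀ t ∈ s, HasDerivAt V 0 t) ∧ (∀ x ∈ s, ∀ y ∈ s, V x = V y) := by
  have hV' : ∀ t ∈ s, HasDerivAt V 0 t := by
    intro t ht
    have hVv : HasDerivAt (fun t => Vv0 + Pv t * Cv) (Qa t - Qrin t) t := by
      simpa using hasDerivAt_stressedVolume_const (V₀ := Vv0) (Pext := 0) hCv.ne' (hPv t ht)
    rw [hVdef]
    refine ((((((hasDerivAt_stressedVolume (hCl t ht) (hClne t ht) (hPl t ht)).add
        (hasDerivAt_stressedVolume_const hCa.ne' (hPa t ht))).add hVv).add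
        (hasDerivAt_stressedVolume (hCr t ht) (hCrne t ht) (hPr t ht))).add
        (hasDerivAt_stressedVolume_const hCpa.ne' (hPpa t ht))).add
        (hasDerivAt_stressedVolume_const hCpv.ne' (hPpv t ht))).congr_deriv ?_
    ring
  exact ⟨hV', fun x hx y hy => hs.convex.eq_of_hasDerivAt_zero hV' hx hy⟩

/-- **CVSim-6 conserves total stressed volume.**
If, at every point of an interval `s`, the pressure functions and the ventricular
capacitance functions are differentiable with nonvanishing ventricular capacitances, and
the CVSim-6 ODE system holds, then the total stressed volume
`ΣV = V_l + V_a + V_v + V_r + V_pa + V_pv` has derivative zero at every point of `s`;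
consequently it is constant on `s`. -/
theorem cvsim6_total_stressed_volume_conserved
    (Pth Ca Cv Cpa Cpv : ℝ)
    (Rlin Rlout Ra Rrin Rrout Rpv : ℝ)
    (hCa : 0 < Ca) (hCv : 0 < Cv) (hCpa : 0 < Cpa) (hCpv : 0 < Cpv)
    (hRlin : 0 < Rlin) (hRlout : 0 < Rlout) (hRa : 0 < Ra)
    (hRrin : 0 < Rrin) (hRrout : 0 < Rrout) (hRpv : 0 < Rpv)
    (Vl0 Va0 Vv0 Vr0 Vpa0 Vpv0 : ℝ)
    (Pl Pa Pv Pr Ppa Ppv Cl Cr Cl' Cr' : ℝ → ℝ)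
    (Qlin Qlout Qa Qrin Qrout Qpv : ℝ → ℝ)
    (hQlin : Qlin = fun t => if Ppv t > Pl t then (Ppv t - Pl t) / Rlin else 0)
    (hQlout : Qlout = fun t => if Pl t > Pa t then (Pl t - Pa t) / Rlout else 0)
    (hQa : Qa = fun t => (Pa t - Pv t) / Ra)
    (hQrin : Qrin = fun t => if Pv t > Pr t then (Pv t - Pr t) / Rrin else 0)
    (hQrout : Qrout = fun t => if Pr t > Ppa t then (Pr t - Ppa t) / Rrout else 0)
    (hQpv : Qpv = fun t => (Ppa t - Ppv t) / Rpv)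
    (V : ℝ → ℝ)
    (hVdef : V = fun t =>
      (Vl0 + (Pl t - Pth) * Cl t) + (Va0 + (Pa t - Pth / 3) * Ca) +
      (Vv0 + Pv t * Cv) + (Vr0 + (Pr t - Pth) * Cr t) +
      (Vpa0 + (Ppa t - Pth) * Cpa) + (Vpv0 + (Ppv t - Pth) * Cpv))
    (s : Set ℝ) (hs : s.OrdConnected)
    (hCl : ∀ t ∈ s, HasDerivAt Cl (Cl' t) t)
    (hCr : ∀ t ∈ s, HasDerivAt Cr (Cr' t) t)
    (hClne : ∀ t ∈ s, Cl t ≠ 0) (hCrne : ∀ t ∈ s, Cr t ≠ 0)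
    (hPl : ∀ t ∈ s, HasDerivAt Pl ((Qlin t - Qlout t - (Pl t - Pth) * Cl' t) / Cl t) t)
    (hPa : ∀ t ∈ s, HasDerivAt Pa ((Qlout t - Qa t) / Ca) t)
    (hPv : ∀ t ∈ s, HasDerivAt Pv ((Qa t - Qrin t) / Cv) t)
    (hPr : ∀ t ∈ s, HasDerivAt Pr ((Qrin t - Qrout t - (Pr t - Pth) * Cr' t) / Cr t) t)
    (hPpa : ∀ t ∈ s, HasDerivAt Ppa ((Qrout t - Qpv t) / Cpa) t)
    (hPpv : ∀ t ∈ s, HasDerivAt Ppv ((Qpv t - Qlin t) / Cpv) t) :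
    (∀ t ∈ s, HasDerivAt V 0 t) ∧ (∀ x ∈ s, ∀ y ∈ s, V x = V y) :=
  cvsim6_total_stressed_volume_conserved_general Pth Ca Cv Cpa Cpv hCa hCv hCpa hCpv Vl0 Va0 Vv0 Vr0
    Vpa0 Vpv0 Pl Pa Pv Pr Ppa Ppv Cl Cr Cl' Cr' Qlin Qlout Qa Qrin Qrout Qpv V hVdef s hs hCl hCr
    hClne hCrne hPl hPa hPv hPr hPpa hPpv
end

section
/- All eigenvalues of the CVSim-6 coefficient matrix A are real: for any positive capacitances C_l, C_a, C_v, C_r, C_pa, C_pv, positive resistances R_{l,in}, R_{l,out}, R_a, R_{r,in}, R_{r,out}, R_pv, any real Ċ_l, Ċ_r, and any valve indicators χ_mi, χ_ao, χ_tr, χ_pu ∈ {0,1}, every complex eigenvalue of A = C⁻¹(−L + D) is real. (Indeed, A is conjugate via the positive diagonal matrix C^{1/2} to the symmetric matrix C^{−1/2}(−L + D)C^{−1/2}.) -/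
/-!
If `A v = μ v` with `v ≠ 0` and `P A = M`, where `M` is Hermitian and `P` positive definite, then
`M v = μ P v`, so `v* M v = μ (v* P v)`. The left side is real and `v* P v` is real and positive,
hence `μ` is real. Here `P = C` is a positive diagonal matrix and `M = -L + D` is real symmetric.
-/

open Matrix
open scoped ComplexOrder

namespace Matrix

variable {n 𝕜 : Type*} [Fintype n] [RCLike 𝕜]

theorem IsHermitian.im_eq_zero_of_mulVec_eq_smul_mulVec {M P : Matrix n n 𝕜}
    (hM : M.IsHermitian) (hP : P.PosDef) {μ : 𝕜} {v : n → 𝕜} (hv : v ≠ 0)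
    (h : M *ᵥ v = μ • P *ᵥ v) : RCLike.im μ = 0 := by
  have hPv : 0 < star v ⬝ᵥ P *ᵥ v := hP.dotProduct_mulVec_pos hv
  have hMv : RCLike.im (star v ⬝ᵥ M *ᵥ v) = 0 := hM.im_star_dotProduct_mulVec_self v
  obtain ⟨hre, him⟩ := RCLike.pos_iff.mp hPv
  rw [h, dotProduct_smul, smul_eq_mul, RCLike.mul_im, him, mul_zero, zero_add] at hMv
  exact (mul_eq_zero.mp hMv).resolve_right hre.ne'

variable [DecidableEq n]

theorem IsHermitian.im_eq_zero_of_mem_spectrum_of_mul_eq {A M P : Matrix n n 𝕜}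
    (hM : M.IsHermitian) (hP : P.PosDef) (hPA : P * A = M) {μ : 𝕜}
    (hμ : μ ∈ spectrum 𝕜 A) : RCLike.im μ = 0 := by
  rw [← spectrum_toLin', ← Module.End.hasEigenvalue_iff_mem_spectrum] at hμ
  obtain ⟨v, hv⟩ := hμ.exists_hasEigenvector
  have hAv : A *ᵥ v = μ • v := hv.apply_eq_smul
  refine hM.im_eq_zero_of_mulVec_eq_smul_mulVec hP hv.2 ?_
  rw [← hPA, ← mulVec_mulVec, hAv, mulVec_smul]

theorem IsSymm.im_eq_zero_of_mem_spectrum_of_diagonal_mul_eq {A M : Matrix n n ℝ} {d : n → ℝ}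
    (hM : M.IsSymm) (hd : ∀ i, 0 < d i) (hdA : diagonal d * A = M) {μ : ℂ}
    (hμ : μ ∈ spectrum ℂ (A.map Complex.ofReal)) : μ.im = 0 := by
  have hMc : (M.map Complex.ofReal).IsHermitian :=
    (isHermitian_iff_isSymm.mpr hM).map _ fun x => (Complex.conj_ofReal x).symm
  have hdc : (diagonal d).map Complex.ofReal = diagonal fun i => (d i : ℂ) :=
    diagonal_map Complex.ofReal_zero
  have hPc : (diagonal fun i => (d i : ℂ)).PosDef :=
    .diagonal fun i => Complex.zero_lt_real.mpr (hd i)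
  refine hMc.im_eq_zero_of_mem_spectrum_of_mul_eq hPc ?_ hμ
  rw [← hdc, ← hdA]
  exact (Matrix.map_mul (f := Complex.ofRealHom)).symm

end Matrix

theorem cvsim6_eigenvalues_real_general
    (Cl Ca Cv Cr Cpa Cpv : ℝ)
    (hCl : 0 < Cl) (hCa : 0 < Ca) (hCv : 0 < Cv)
    (hCr : 0 < Cr) (hCpa : 0 < Cpa) (hCpv : 0 < Cpv)
    (Rlin Rlout Ra Rrin Rrout Rpv : ℝ)
    (Cdl Cdr : ℝ)
    (χmi χao χtr χpu : ℝ)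
    (C L D A : Matrix (Fin 6) (Fin 6) ℝ)
    (hC : C = Matrix.diagonal ![Cl, Ca, Cv, Cr, Cpa, Cpv])
    (hL : L = !![χao / Rlout + χmi / Rlin, -(χao / Rlout), 0, 0, 0, -(χmi / Rlin);
                 -(χao / Rlout), χao / Rlout + 1 / Ra, -(1 / Ra), 0, 0, 0;
                 0, -(1 / Ra), 1 / Ra + χtr / Rrin, -(χtr / Rrin), 0, 0;
                 0, 0, -(χtr / Rrin), χtr / Rrin + χpu / Rrout, -(χpu / Rrout), 0;
                 0, 0, 0, -(χpu / Rrout), χpu / Rrout + 1 / Rpv, -(1 / Rpv);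
                 -(χmi / Rlin), 0, 0, 0, -(1 / Rpv), 1 / Rpv + χmi / Rlin])
    (hD : D = Matrix.diagonal ![-Cdl, 0, 0, -Cdr, 0, 0])
    (hA : A = C⁻¹ * (-L + D)) :
    ∀ μ : ℂ, μ ∈ spectrum ℂ (A.map Complex.ofReal) → μ.im = 0 := by
  intro μ hμ
  have hc : ∀ i, 0 < ![Cl, Ca, Cv, Cr, Cpa, Cpv] i := by
    intro i; fin_cases i <;> assumption
  have hL_symm : L.IsSymm := by
    subst hL; ext i j; fin_cases i <;> fin_cases j <;> rfl
  have hC_det : IsUnit C.det := by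
    rw [hC, det_diagonal]
    exact (Finset.prod_pos fun i _ => hc i).ne'.isUnit
  have hCA : C * A = -L + D := by rw [hA, mul_nonsing_inv_cancel_left (h := hC_det)]
  subst hC hD
  exact (hL_symm.neg.add (isSymm_diagonal _)).im_eq_zero_of_mem_spectrum_of_diagonal_mul_eq
    hc hCA hμ

/-- **All eigenvalues of the CVSim-6 coefficient matrix are real.**
For positive capacitances and resistances, arbitrary real `Ċ_l, Ċ_r`, and valve
indicators in `{0,1}`, every complex eigenvalue of `A = C⁻¹(−L + D)` is real.
(Components are ordered `l = 0, a = 1, v = 2, r = 3, pa = 4, pv = 5`.) -/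
theorem cvsim6_eigenvalues_real
    (Cl Ca Cv Cr Cpa Cpv : ℝ)
    (hCl : 0 < Cl) (hCa : 0 < Ca) (hCv : 0 < Cv)
    (hCr : 0 < Cr) (hCpa : 0 < Cpa) (hCpv : 0 < Cpv)
    (Rlin Rlout Ra Rrin Rrout Rpv : ℝ)
    (hRlin : 0 < Rlin) (hRlout : 0 < Rlout) (hRa : 0 < Ra)
    (hRrin : 0 < Rrin) (hRrout : 0 < Rrout) (hRpv : 0 < Rpv)
    (Cdl Cdr : ℝ)
    (χmi χao χtr χpu : ℝ)
    (hχmi : χmi = 0 ∨ χmi = 1) (hχao : χao = 0 ∨ χao = 1)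
    (hχtr : χtr = 0 ∨ χtr = 1) (hχpu : χpu = 0 ∨ χpu = 1)
    (C L D A : Matrix (Fin 6) (Fin 6) ℝ)
    (hC : C = Matrix.diagonal ![Cl, Ca, Cv, Cr, Cpa, Cpv])
    (hL : L = !![χao / Rlout + χmi / Rlin, -(χao / Rlout), 0, 0, 0, -(χmi / Rlin);
                 -(χao / Rlout), χao / Rlout + 1 / Ra, -(1 / Ra), 0, 0, 0;
                 0, -(1 / Ra), 1 / Ra + χtr / Rrin, -(χtr / Rrin), 0, 0;
                 0, 0, -(χtr / Rrin), χtr / Rrin + χpu / Rrout, -(χpu / Rrout), 0;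
                 0, 0, 0, -(χpu / Rrout), χpu / Rrout + 1 / Rpv, -(1 / Rpv);
                 -(χmi / Rlin), 0, 0, 0, -(1 / Rpv), 1 / Rpv + χmi / Rlin])
    (hD : D = Matrix.diagonal ![-Cdl, 0, 0, -Cdr, 0, 0])
    (hA : A = C⁻¹ * (-L + D)) :
    ∀ μ : ℂ, μ ∈ spectrum ℂ (A.map Complex.ofReal) → μ.im = 0 :=
  cvsim6_eigenvalues_real_general Cl Ca Cv Cr Cpa Cpv hCl hCa hCv hCr hCpa hCpv Rlin Rlout Ra Rrin
    Rrout Rpv Cdl Cdr χmi χao χtr χpu C L D A hC hL hD hA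
end
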